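/- arXiv:1501.05752 — 12 statements merged into one kernel-verified Lean document; each statement's English description precedes it below -/
import Mathlib

section
/- Let x, y ≥ 2 be real numbers and let Δx ≥ 0 and 0 ≤ Δy < y be real. Then the function g(x, y) = −f(x, y) + f(x + Δx, y − Δy) is monotonically nondecreasing in x and monotonically nonincreasing in y, where f(x,y) = √((x + y − 2)/(x·y)). -/
set_option maxHeartbeats 4000000

noncomputable def f (x y : ℝ) : ℝ := Real.sqrt ((x + y - 2) / (x * y))

private lemma key' (f₁ f₂ g₁ g₂ : ℝ) (hf2 : 0 < f₂) (hg2 : 0 ≤ g₂)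
    (hf : f₂ ≤ f₁) (hg : g₂ ≤ g₁)
    (h1 : (g₁ - g₂)^2 * f₁ ≤ (f₁ - f₂)^2 * g₁)
    (h2 : (g₁ - g₂)^2 * f₂ ≤ (f₁ - f₂)^2 * g₂) :
    Real.sqrt g₁ - Real.sqrt f₁ ≤ Real.sqrt g₂ - Real.sqrt f₂ := by
  have hf1 : 0 < f₁ := lt_of_lt_of_le hf2 hf
  have hs2 : 0 < Real.sqrt f₂ := Real.sqrt_pos.mpr hf2
  have hs1 : Real.sqrt f₂ ≤ Real.sqrt f₁ := Real.sqrt_le_sqrt hf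
  have ht2 : 0 ≤ Real.sqrt g₂ := Real.sqrt_nonneg _
  have ht : Real.sqrt g₂ ≤ Real.sqrt g₁ := Real.sqrt_le_sqrt hg
  have e1 : Real.sqrt f₁ ^ 2 = f₁ := Real.sq_sqrt hf1.le
  have e2 : Real.sqrt f₂ ^ 2 = f₂ := Real.sq_sqrt hf2.le
  have e3 : Real.sqrt g₁ ^ 2 = g₁ := Real.sq_sqrt (hg2.trans hg)
  have e4 : Real.sqrt g₂ ^ 2 = g₂ := Real.sq_sqrt hg2
  have hgg : 0 ≤ g₁ - g₂ := by linarith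
  have hff : 0 ≤ f₁ - f₂ := by linarith
  have k1 : (g₁ - g₂) * Real.sqrt f₁ ≤ (f₁ - f₂) * Real.sqrt g₁ := by
    have := Real.sqrt_le_sqrt h1
    rwa [Real.sqrt_mul (sq_nonneg _), Real.sqrt_mul (sq_nonneg _),
      Real.sqrt_sq hgg, Real.sqrt_sq hff] at this
  have k2 : (g₁ - g₂) * Real.sqrt f₂ ≤ (f₁ - f₂) * Real.sqrt g₂ := by
    have := Real.sqrt_le_sqrt h2
    rwa [Real.sqrt_mul (sq_nonneg _), Real.sqrt_mul (sq_nonneg _),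
      Real.sqrt_sq hgg, Real.sqrt_sq hff] at this
  by_cases hP : Real.sqrt g₁ + Real.sqrt g₂ ≤ 0
  · have ht1 : Real.sqrt g₁ = 0 := le_antisymm (by linarith) (Real.sqrt_nonneg _)
    have ht2' : Real.sqrt g₂ = 0 := le_antisymm (by linarith) ht2
    rw [ht1, ht2']; linarith
  · push_neg at hP
    have hQ : 0 < Real.sqrt f₁ + Real.sqrt f₂ := by linarith
    have h : (Real.sqrt g₁ - Real.sqrt g₂) * ((Real.sqrt g₁ + Real.sqrt g₂) * (Real.sqrt f₁ + Real.sqrt f₂))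
        ≤ (Real.sqrt f₁ - Real.sqrt f₂) * ((Real.sqrt g₁ + Real.sqrt g₂) * (Real.sqrt f₁ + Real.sqrt f₂)) := by
      nlinarith [k1, k2]
    have := (mul_le_mul_iff_of_pos_right (mul_pos hP hQ)).mp h
    linarith

private lemma main' (x₁ x₂ y w δ : ℝ) (hx1 : 0 < x₁) (hx12 : x₁ ≤ x₂) (hy : 2 ≤ y)
    (hw : 0 < w) (hwy : w ≤ y) (hδ : 0 ≤ δ) :
    Real.sqrt ((x₁ + δ + w - 2) / ((x₁ + δ) * w)) - Real.sqrt ((x₁ + y - 2) / (x₁ * y))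
      ≤ Real.sqrt ((x₂ + δ + w - 2) / ((x₂ + δ) * w)) - Real.sqrt ((x₂ + y - 2) / (x₂ * y)) := by
  set a : ℝ := x₁ + δ with ha_def
  set b : ℝ := x₂ + δ with hb_def
  have hx2 : 0 < x₂ := lt_of_lt_of_le hx1 hx12
  have ha : 0 < a := by positivity
  have hb : 0 < b := by rw [hb_def]; linarith
  have hab : a ≤ b := by rw [ha_def, hb_def]; linarith
  have hy0 : 0 < y := by linarith
  have hF : (x₂ + y - 2) / (x₂ * y) ≤ (x₁ + y - 2) / (x₁ * y) := by
    rw [div_le_div_iff₀ (by positivity) (by positivity)]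
    nlinarith [mul_nonneg (mul_nonneg (by linarith : (0:ℝ) ≤ y - 2) hy0.le) (by linarith : (0:ℝ) ≤ x₂ - x₁)]
  have hF2pos : 0 < (x₂ + y - 2) / (x₂ * y) := div_pos (by linarith) (by positivity)
  by_cases hw2 : w < 2
  · have hG : (a + w - 2) / (a * w) ≤ (b + w - 2) / (b * w) := by
      rw [div_le_div_iff₀ (by positivity) (by positivity)]
      nlinarith [mul_nonpos_of_nonpos_of_nonneg (by linarith : w - 2 ≤ 0)
        (mul_nonneg hw.le (by linarith : (0:ℝ) ≤ b - a))]
    have h1 := Real.sqrt_le_sqrt hG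
    have h2 := Real.sqrt_le_sqrt hF
    linarith
  · push_neg at hw2
    have hG2pos : 0 < (b + w - 2) / (b * w) := div_pos (by linarith) (by positivity)
    have hG : (b + w - 2) / (b * w) ≤ (a + w - 2) / (a * w) := by
      rw [div_le_div_iff₀ (by positivity) (by positivity)]
      nlinarith [mul_nonneg (mul_nonneg (by linarith : (0:ℝ) ≤ w - 2) hw.le) (by linarith : (0:ℝ) ≤ b - a)]
    have eG : (a + w - 2) / (a * w) - (b + w - 2) / (b * w) = ((w-2)*(x₂-x₁))/(a*b*w) := by
      rw [ha_def, hb_def]; field_simp; ring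
    have eF : (x₁ + y - 2) / (x₁ * y) - (x₂ + y - 2) / (x₂ * y) = ((y-2)*(x₂-x₁))/(x₁*x₂*y) := by
      field_simp; ring
    have k0 : (w-2)*y ≤ (y-2)*w := by nlinarith
    have k1 : (w-2)^2*y ≤ (y-2)^2*w := by
      nlinarith [mul_le_mul_of_nonneg_left k0 (by linarith : (0:ℝ) ≤ w - 2),
        mul_le_mul_of_nonneg_right (by linarith : w - 2 ≤ y - 2)
          (mul_nonneg (by linarith : (0:ℝ) ≤ y-2) hw.le)]
    have hx1a : x₁ ≤ a := by rw [ha_def]; linarith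
    have hx2b : x₂ ≤ b := by rw [hb_def]; linarith
    have hx1sq : x₁^2 ≤ a^2 := by nlinarith
    have hx2sq : x₂^2 ≤ b^2 := by nlinarith
    have h1 : ((a + w - 2) / (a * w) - (b + w - 2) / (b * w))^2 * ((x₁ + y - 2) / (x₁ * y))
        ≤ ((x₁ + y - 2) / (x₁ * y) - (x₂ + y - 2) / (x₂ * y))^2 * ((a + w - 2) / (a * w)) := by
      rw [eG, eF, div_pow, div_pow, div_mul_div_comm, div_mul_div_comm,
        div_le_div_iff₀ (by positivity) (by positivity)]
      have hA : ((w-2)^2*y) * (x₁^2 * (x₂^2 * ((x₂-x₁)^2 * (x₁*(a*(w*y))))))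
          ≤ ((y-2)^2*w) * (a^2 * (b^2 * ((x₂-x₁)^2 * (x₁*(a*(w*y)))))) := by
        have hc : (0:ℝ) ≤ (x₂-x₁)^2 * (x₁*(a*(w*y))) := by positivity
        gcongr
      have hB : ((w-2)*y) * (x₁ * (x₂^2 * ((y-2)*((w-2)*((x₂-x₁)^2 * (x₁*(a*(w*y))))))))
          ≤ ((y-2)*w) * (a * (b^2 * ((y-2)*((w-2)*((x₂-x₁)^2 * (x₁*(a*(w*y)))))))) := by
        have hc : (0:ℝ) ≤ (y-2)*((w-2)*((x₂-x₁)^2 * (x₁*(a*(w*y))))) :=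
          mul_nonneg (by linarith) (mul_nonneg (by linarith) (by positivity))
        have hyw : (0:ℝ) ≤ (y-2)*w := mul_nonneg (by linarith) hw.le
        gcongr <;> nlinarith [hyw]
      nlinarith [hA, hB]
    have h2 : ((a + w - 2) / (a * w) - (b + w - 2) / (b * w))^2 * ((x₂ + y - 2) / (x₂ * y))
        ≤ ((x₁ + y - 2) / (x₁ * y) - (x₂ + y - 2) / (x₂ * y))^2 * ((b + w - 2) / (b * w)) := by
      rw [eG, eF, div_pow, div_pow, div_mul_div_comm, div_mul_div_comm,
        div_le_div_iff₀ (by positivity) (by positivity)]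
      have hA : ((w-2)^2*y) * (x₁^2 * (x₂^2 * ((x₂-x₁)^2 * (x₂*(b*(w*y))))))
          ≤ ((y-2)^2*w) * (a^2 * (b^2 * ((x₂-x₁)^2 * (x₂*(b*(w*y)))))) := by
        have hc : (0:ℝ) ≤ (x₂-x₁)^2 * (x₂*(b*(w*y))) := by positivity
        gcongr
      have hB : ((w-2)*y) * (x₁^2 * (x₂ * ((y-2)*((w-2)*((x₂-x₁)^2 * (x₂*(b*(w*y))))))))
          ≤ ((y-2)*w) * (a^2 * (b * ((y-2)*((w-2)*((x₂-x₁)^2 * (x₂*(b*(w*y)))))))) := by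
        have hc : (0:ℝ) ≤ (y-2)*((w-2)*((x₂-x₁)^2 * (x₂*(b*(w*y))))) :=
          mul_nonneg (by linarith) (mul_nonneg (by linarith) (by positivity))
        have hyw : (0:ℝ) ≤ (y-2)*w := mul_nonneg (by linarith) hw.le
        gcongr <;> nlinarith [hyw]
      nlinarith [hA, hB]
    exact key' _ _ _ _ hF2pos hG2pos.le hF hG h1 h2

theorem stmt1 (Δx Δy : ℝ) (hΔx : 0 ≤ Δx) (hΔy : 0 ≤ Δy) :
    (∀ x₁ x₂ y : ℝ, 2 ≤ x₁ → x₁ ≤ x₂ → 2 ≤ y → Δy < y →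
      -f x₁ y + f (x₁ + Δx) (y - Δy) ≤ -f x₂ y + f (x₂ + Δx) (y - Δy)) ∧
    (∀ x y₁ y₂ : ℝ, 2 ≤ x → 2 ≤ y₁ → y₁ ≤ y₂ → Δy < y₁ →
      -f x y₂ + f (x + Δx) (y₂ - Δy) ≤ -f x y₁ + f (x + Δx) (y₁ - Δy)) := by
  constructor
  · intro x₁ x₂ y hx1 hx12 hy hΔyy
    have H := main' x₁ x₂ y (y - Δy) Δx (by linarith) hx12 hy (by linarith) (by linarith) hΔx
    unfold f
    linarith [H]
  · intro x y₁ y₂ hx hy1 hy12 hΔyy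
    have H := main' (y₁ - Δy) (y₂ - Δy) (x + Δx) x Δy (by linarith) (by linarith)
      (by linarith) (by linarith) (by linarith) hΔy
    have e1 : (y₁ - Δy + Δy + x - 2) / ((y₁ - Δy + Δy) * x) = (x + y₁ - 2) / (x * y₁) := by
      ring
    have e2 : (y₂ - Δy + Δy + x - 2) / ((y₂ - Δy + Δy) * x) = (x + y₂ - 2) / (x * y₂) := by
      ring
    have e3 : (y₁ - Δy + (x + Δx) - 2) / ((y₁ - Δy) * (x + Δx))
        = (x + Δx + (y₁ - Δy) - 2) / ((x + Δx) * (y₁ - Δy)) := by ring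
    have e4 : (y₂ - Δy + (x + Δx) - 2) / ((y₂ - Δy) * (x + Δx))
        = (x + Δx + (y₂ - Δy) - 2) / ((x + Δx) * (y₂ - Δy)) := by ring
    rw [e1, e2, e3, e4] at H
    unfold f
    linarith [H]
end

section
/- For every real d ≥ 14, the quantity −f(d, 4) + f(d − 1, 5) + (d − 3)·(−f(d, 4) + f(d − 1, 4)) + 1/√(d − 1) − 1/√d is strictly negative, where f(x,y) = √((x + y − 2)/(x·y)). -/
set_option maxHeartbeats 1000000 in
private lemma stmt7_aux_C2 (d : ℝ) (hd : 14 ≤ d) (c a : ℝ)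
    (hla : (d+1)*(d+2)/(2*d^2+4*d+1) ≤ a)
    (hlc : d*(d+1)/(2*d^2-1) ≤ c)
    (hkey2 : (c - a) * (c + a) = 1/(2*d*(d-1))) :
    (d-3)*(c - a) ≤ (d-3)*((2*d^2+4*d+1)*(2*d^2-1))
      /(2*d*(d-1)*((d+1)*(d+2)*(2*d^2-1) + d*(d+1)*(2*d^2+4*d+1))) := by
  have hd0 : (0:ℝ) < d := by linarith
  have hd1 : (0:ℝ) < d - 1 := by linarith
  have h1 : (0:ℝ) < 2*d^2+4*d+1 := by nlinarith
  have h2 : (0:ℝ) < 2*d^2-1 := by nlinarith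
  have hPL : (0:ℝ) < (d+1)*(d+2)*(2*d^2-1) + d*(d+1)*(2*d^2+4*d+1) := by nlinarith
  have hsum2 : ((d+1)*(d+2)*(2*d^2-1) + d*(d+1)*(2*d^2+4*d+1))/((2*d^2+4*d+1)*(2*d^2-1)) ≤ c + a := by
    calc ((d+1)*(d+2)*(2*d^2-1) + d*(d+1)*(2*d^2+4*d+1))/((2*d^2+4*d+1)*(2*d^2-1))
        = (d+1)*(d+2)/(2*d^2+4*d+1) + d*(d+1)/(2*d^2-1) := by
          rw [div_add_div _ _ h1.ne' h2.ne']; ring_nf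
      _ ≤ c + a := by linarith
  have hca_pos : 0 < c + a := lt_of_lt_of_le (by positivity) hsum2
  have hc_a : c - a = (1/(2*d*(d-1)))/(c+a) := by
    rw [eq_div_iff hca_pos.ne']; exact hkey2
  have h1' : (1/(2*d*(d-1)))/(c+a) ≤ (1/(2*d*(d-1)))
      /(((d+1)*(d+2)*(2*d^2-1) + d*(d+1)*(2*d^2+4*d+1))/((2*d^2+4*d+1)*(2*d^2-1))) := by
    rw [div_le_div_iff₀ hca_pos (by positivity)]
    exact mul_le_mul_of_nonneg_left hsum2 (by positivity)
  have hfin : (1/(2*d*(d-1)))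
      /(((d+1)*(d+2)*(2*d^2-1) + d*(d+1)*(2*d^2+4*d+1))/((2*d^2+4*d+1)*(2*d^2-1)))
      = ((2*d^2+4*d+1)*(2*d^2-1))
      /(2*d*(d-1)*((d+1)*(d+2)*(2*d^2-1) + d*(d+1)*(2*d^2+4*d+1))) := by
    rw [div_div_div_eq]
    try ring_nf
  calc (d-3)*(c-a) = (d-3)*((1/(2*d*(d-1)))/(c+a)) := by rw [← hc_a]
    _ ≤ (d-3)*((1/(2*d*(d-1)))
        /(((d+1)*(d+2)*(2*d^2-1) + d*(d+1)*(2*d^2+4*d+1))/((2*d^2+4*d+1)*(2*d^2-1)))) :=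
      mul_le_mul_of_nonneg_left h1' (by linarith)
    _ = (d-3)*((2*d^2+4*d+1)*(2*d^2-1))
        /(2*d*(d-1)*((d+1)*(d+2)*(2*d^2-1) + d*(d+1)*(2*d^2+4*d+1))) := by
      rw [hfin]; ring

set_option maxHeartbeats 1000000 in
private lemma stmt7_aux_C1 (d : ℝ) (hd : 14 ≤ d) (a b : ℝ) (hb0 : 0 ≤ b) (ha0 : 0 < a)
    (hua : a ≤ (2*d^2+4*d+1)/(4*d*(d+1)))
    (hub : b ≤ (51841*d^2+51841*d-45362)/(57960*(d-1)*(2*d+1)))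
    (hkey1 : (a - b) * (a + b) = (d+2)*(d-5)/(20*d*(d-1))) :
    b - a ≤ -((d+2)*(d-5)*(4*d*(d+1)*(57960*(d-1)*(2*d+1)))
      /(20*d*(d-1)*((2*d^2+4*d+1)*(57960*(d-1)*(2*d+1)) + (51841*d^2+51841*d-45362)*(4*d*(d+1))))) := by
  have hd0 : (0:ℝ) < d := by linarith
  have hd1 : (0:ℝ) < d - 1 := by linarith
  have h1 : (0:ℝ) < 4*d*(d+1) := by positivity
  have h2 : (0:ℝ) < 57960*(d-1)*(2*d+1) := by
    apply mul_pos (by linarith) (by linarith)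
  have hab_pos : 0 < a + b := by linarith
  have hN : (0:ℝ) ≤ (d+2)*(d-5)/(20*d*(d-1)) := by
    apply div_nonneg (by nlinarith) (by nlinarith)
  have hsum1 : a + b ≤ ((2*d^2+4*d+1)*(57960*(d-1)*(2*d+1)) + (51841*d^2+51841*d-45362)*(4*d*(d+1)))
      /((4*d*(d+1))*(57960*(d-1)*(2*d+1))) := by
    calc a + b ≤ (2*d^2+4*d+1)/(4*d*(d+1)) + (51841*d^2+51841*d-45362)/(57960*(d-1)*(2*d+1)) := by
          linarith
      _ = ((2*d^2+4*d+1)*(57960*(d-1)*(2*d+1)) + (51841*d^2+51841*d-45362)*(4*d*(d+1)))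
          /((4*d*(d+1))*(57960*(d-1)*(2*d+1))) := by
          rw [div_add_div _ _ h1.ne' h2.ne']; ring_nf
  have hPU : (0:ℝ) < ((2*d^2+4*d+1)*(57960*(d-1)*(2*d+1)) + (51841*d^2+51841*d-45362)*(4*d*(d+1)))
      /((4*d*(d+1))*(57960*(d-1)*(2*d+1))) := lt_of_lt_of_le hab_pos hsum1
  have ha_b : a - b = ((d+2)*(d-5)/(20*d*(d-1)))/(a+b) := by
    rw [eq_div_iff hab_pos.ne']; exact hkey1
  have h3 : ((d+2)*(d-5)/(20*d*(d-1)))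
      /(((2*d^2+4*d+1)*(57960*(d-1)*(2*d+1)) + (51841*d^2+51841*d-45362)*(4*d*(d+1)))
        /((4*d*(d+1))*(57960*(d-1)*(2*d+1)))) ≤ a - b := by
    rw [ha_b, div_le_div_iff₀ hPU hab_pos]
    exact mul_le_mul_of_nonneg_left hsum1 hN
  have h4 : ((d+2)*(d-5)/(20*d*(d-1)))
      /(((2*d^2+4*d+1)*(57960*(d-1)*(2*d+1)) + (51841*d^2+51841*d-45362)*(4*d*(d+1)))
        /((4*d*(d+1))*(57960*(d-1)*(2*d+1))))
      = (d+2)*(d-5)*(4*d*(d+1)*(57960*(d-1)*(2*d+1)))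
      /(20*d*(d-1)*((2*d^2+4*d+1)*(57960*(d-1)*(2*d+1)) + (51841*d^2+51841*d-45362)*(4*d*(d+1)))) := by
    rw [div_div_div_eq]
    try ring_nf
  linarith [h4 ▸ h3]

set_option maxHeartbeats 1000000 in
private lemma stmt7_aux_C3 (d : ℝ) (hd : 14 ≤ d) (s t : ℝ) (hs0 : 0 < s) (ht0 : 0 < t)
    (hs2 : s^2 = d) (ht2 : t^2 = d - 1)
    (hls : 18700*d/(2500*d+34969) ≤ s)
    (hlt : 180*(d-1)/(25*d+299) ≤ t) :
    1/t - 1/s ≤ ((2500*d+34969)*(25*d+299))^2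
      /(3366000*d*(d-1)*(18700*d*(25*d+299) + 180*(d-1)*(2500*d+34969))) := by
  have hd0 : (0:ℝ) < d := by linarith
  have hd1 : (0:ℝ) < d - 1 := by linarith
  have hDs : (0:ℝ) < 2500*d+34969 := by linarith
  have hDt : (0:ℝ) < 25*d+299 := by linarith
  have hLS0 : (0:ℝ) ≤ 18700*d/(2500*d+34969) := by positivity
  have hLT0 : (0:ℝ) ≤ 180*(d-1)/(25*d+299) := div_nonneg (by linarith) (by linarith)
  have hstpos : 0 < s*t*(s+t) := mul_pos (mul_pos hs0 ht0) (by linarith)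
  have hkey3 : (1/t - 1/s) * (s*t*(s+t)) = 1 := by
    have h : (1/t - 1/s) * (s*t*(s+t)) = s^2 - t^2 := by field_simp; ring
    rw [h, hs2, ht2]; ring
  have h3eq : 1/t - 1/s = 1/(s*t*(s+t)) := by rw [eq_div_iff hstpos.ne']; exact hkey3
  have hprod : (18700*d/(2500*d+34969))*(180*(d-1)/(25*d+299))
      *((18700*d/(2500*d+34969))+(180*(d-1)/(25*d+299))) ≤ s*t*(s+t) := by
    apply mul_le_mul (mul_le_mul hls hlt hLT0 hs0.le) (by linarith)
      (by linarith [hLS0, hLT0]) (by positivity)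
  have hPQid : (18700*d/(2500*d+34969))*(180*(d-1)/(25*d+299))
      *((18700*d/(2500*d+34969))+(180*(d-1)/(25*d+299)))
      = (3366000*d*(d-1)*(18700*d*(25*d+299) + 180*(d-1)*(2500*d+34969)))
        /(((2500*d+34969)*(25*d+299))^2) := by
    field_simp
    ring
  have hPSQS : (0:ℝ) < (3366000*d*(d-1)*(18700*d*(25*d+299) + 180*(d-1)*(2500*d+34969)))
      /(((2500*d+34969)*(25*d+299))^2) := by
    apply div_pos _ (by positivity)
    apply mul_pos (mul_pos (by linarith) hd1)
    nlinarith
  rw [h3eq]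
  calc 1/(s*t*(s+t)) ≤ 1/((3366000*d*(d-1)*(18700*d*(25*d+299) + 180*(d-1)*(2500*d+34969)))
        /(((2500*d+34969)*(25*d+299))^2)) :=
      one_div_le_one_div_of_le hPSQS (hPQid ▸ hprod)
    _ = ((2500*d+34969)*(25*d+299))^2
        /(3366000*d*(d-1)*(18700*d*(25*d+299) + 180*(d-1)*(2500*d+34969))) := one_div_div _ _

set_option maxHeartbeats 4000000 in
private lemma stmt7_aux_D (d : ℝ) (hd : 14 ≤ d) :
    (d-3)*((2*d^2+4*d+1)*(2*d^2-1))
      /(2*d*(d-1)*((d+1)*(d+2)*(2*d^2-1) + d*(d+1)*(2*d^2+4*d+1)))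
    + ((2500*d+34969)*(25*d+299))^2
      /(3366000*d*(d-1)*(18700*d*(25*d+299) + 180*(d-1)*(2500*d+34969)))
    < (d+2)*(d-5)*(4*d*(d+1)*(57960*(d-1)*(2*d+1)))
      /(20*d*(d-1)*((2*d^2+4*d+1)*(57960*(d-1)*(2*d+1)) + (51841*d^2+51841*d-45362)*(4*d*(d+1)))) := by
  have hd0 : (0:ℝ) < d := by linarith
  have hd1 : (0:ℝ) < d - 1 := by linarith
  have he : (0:ℝ) ≤ d - 14 := by linarith
  have hq1 : (0:ℝ) < 2*d^2+4*d+1 := by positivity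
  have hq2 : (0:ℝ) < 2*d^2-1 := by nlinarith [sq_nonneg (d-14)]
  have hq3 : (0:ℝ) < 51841*d^2+51841*d-45362 := by nlinarith [sq_nonneg (d-14)]
  have hD2 : (0:ℝ) < 2*d*(d-1)*((d+1)*(d+2)*(2*d^2-1) + d*(d+1)*(2*d^2+4*d+1)) := by
    apply mul_pos (mul_pos (by linarith) hd1)
    have h1 : (0:ℝ) < (d+1)*(d+2)*(2*d^2-1) := mul_pos (mul_pos (by linarith) (by linarith)) hq2
    have h2 : (0:ℝ) < d*(d+1)*(2*d^2+4*d+1) := mul_pos (mul_pos hd0 (by linarith)) hq1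
    linarith
  have hPS : (0:ℝ) < 3366000*d*(d-1)*(18700*d*(25*d+299) + 180*(d-1)*(2500*d+34969)) := by
    apply mul_pos (mul_pos (by linarith) hd1)
    nlinarith
  have hD1 : (0:ℝ) < 20*d*(d-1)*((2*d^2+4*d+1)*(57960*(d-1)*(2*d+1)) + (51841*d^2+51841*d-45362)*(4*d*(d+1))) := by
    apply mul_pos (mul_pos (by linarith) hd1)
    have h1 : (0:ℝ) < (2*d^2+4*d+1)*(57960*(d-1)*(2*d+1)) :=
      mul_pos hq1 (mul_pos (by linarith) (by linarith))
    have h2 : (0:ℝ) < (51841*d^2+51841*d-45362)*(4*d*(d+1)) :=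
      mul_pos hq3 (by positivity)
    linarith
  rw [div_add_div _ _ hD2.ne' hPS.ne', div_lt_div_iff₀ (mul_pos hD2 hPS) hD1]
  nlinarith [he, pow_nonneg he 2, pow_nonneg he 3, pow_nonneg he 4, pow_nonneg he 5,
    pow_nonneg he 6, pow_nonneg he 7, pow_nonneg he 8, pow_nonneg he 9, pow_nonneg he 10,
    pow_nonneg he 11, pow_nonneg he 12, pow_nonneg he 13, pow_nonneg he 14, pow_nonneg he 15,
    pow_nonneg he 16, pow_nonneg he 17]

set_option maxHeartbeats 1000000 in
theorem stmt7 (d : ℝ) (hd : 14 ≤ d) :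
    -f d 4 + f (d - 1) 5 + (d - 3) * (-f d 4 + f (d - 1) 4)
      + 1 / Real.sqrt (d - 1) - 1 / Real.sqrt d < 0 := by
  have hd0 : (0:ℝ) < d := by linarith
  have hd1 : (0:ℝ) < d - 1 := by linarith
  have hfa : f d 4 = Real.sqrt ((d+2)/(4*d)) := by unfold f; congr 1; ring
  have hfb : f (d-1) 5 = Real.sqrt ((d+2)/(5*(d-1))) := by unfold f; congr 1; ring
  have hfc : f (d-1) 4 = Real.sqrt ((d+1)/(4*(d-1))) := by unfold f; congr 1; ring
  rw [hfa, hfb, hfc]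
  set s := Real.sqrt d with hs
  set t := Real.sqrt (d-1) with ht
  set a := Real.sqrt ((d+2)/(4*d)) with ha
  set b := Real.sqrt ((d+2)/(5*(d-1))) with hb
  set c := Real.sqrt ((d+1)/(4*(d-1))) with hc
  have hs0 : 0 < s := Real.sqrt_pos.mpr hd0
  have ht0 : 0 < t := Real.sqrt_pos.mpr hd1
  have hs2 : s^2 = d := Real.sq_sqrt hd0.le
  have ht2 : t^2 = d - 1 := Real.sq_sqrt hd1.le
  have ha2 : a^2 = (d+2)/(4*d) := Real.sq_sqrt (by positivity)
  have hb2 : b^2 = (d+2)/(5*(d-1)) := Real.sq_sqrt (by positivity)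
  have hc2 : c^2 = (d+1)/(4*(d-1)) := Real.sq_sqrt (by positivity)
  have hb0 : 0 ≤ b := Real.sqrt_nonneg _
  have hla : (d+1)*(d+2)/(2*d^2+4*d+1) ≤ a := by
    apply Real.le_sqrt_of_sq_le
    rw [div_pow, div_le_div_iff₀ (by positivity) (by positivity)]
    nlinarith [hd0]
  have hlc : d*(d+1)/(2*d^2-1) ≤ c := by
    apply Real.le_sqrt_of_sq_le
    rw [div_pow, div_le_div_iff₀ (by nlinarith [sq_nonneg (d-14)]) (by positivity)]
    nlinarith [hd0]
  have hua : a ≤ (2*d^2+4*d+1)/(4*d*(d+1)) := by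
    rw [ha, Real.sqrt_le_left (by positivity)]
    rw [div_pow, div_le_div_iff₀ (by positivity) (by positivity)]
    nlinarith [hd0]
  have hub : b ≤ (51841*d^2+51841*d-45362)/(57960*(d-1)*(2*d+1)) := by
    rw [hb, Real.sqrt_le_left (div_nonneg (by nlinarith [sq_nonneg (d-14)]) (by nlinarith))]
    rw [div_pow, div_le_div_iff₀ (by positivity) (by positivity)]
    nlinarith [mul_nonneg hd1.le (sq_nonneg (d^2+d-58322))]
  have hls : 18700*d/(2500*d+34969) ≤ s := by
    apply Real.le_sqrt_of_sq_le
    rw [div_pow, div_le_iff₀ (by positivity)]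
    nlinarith [mul_nonneg hd0.le (sq_nonneg (2500*d-34969))]
  have hlt : 180*(d-1)/(25*d+299) ≤ t := by
    apply Real.le_sqrt_of_sq_le
    rw [div_pow, div_le_iff₀ (by positivity)]
    nlinarith [mul_nonneg hd1.le (sq_nonneg (25*d-349))]
  have ha0 : 0 < a := lt_of_lt_of_le (div_pos (by nlinarith) (by positivity)) hla
  have hkey2 : (c - a) * (c + a) = 1/(2*d*(d-1)) := by
    have h : (c-a)*(c+a) = c^2 - a^2 := by ring
    rw [h, hc2, ha2]; field_simp; ring
  have hkey1 : (a - b) * (a + b) = (d+2)*(d-5)/(20*d*(d-1)) := by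
    have h : (a-b)*(a+b) = a^2 - b^2 := by ring
    rw [h, ha2, hb2]; field_simp; ring
  have hC2 := stmt7_aux_C2 d hd c a hla hlc hkey2
  have hC1 := stmt7_aux_C1 d hd a b hb0 ha0 hua hub hkey1
  have hC3 := stmt7_aux_C3 d hd s t hs0 ht0 hs2 ht2 hls hlt
  have hD := stmt7_aux_D d hd
  linarith [hC1, hC2, hC3, hD]
end

section
/- For every real d ≥ 12, the quantity −f(d, 4) + f(d − 1, 5) + (d − 2)·(−f(d, 4) + f(d − 1, 4)) is strictly negative, where f(x,y) = √((x + y − 2)/(x·y)). -/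
set_option maxHeartbeats 1000000 in
theorem stmt8 (d : ℝ) (hd : 12 ≤ d) :
    -f d 4 + f (d - 1) 5 + (d - 2) * (-f d 4 + f (d - 1) 4) < 0 := by
  have hd0 : (0:ℝ) < d := by linarith
  have hd1 : (0:ℝ) < d - 1 := by linarith
  set a := f d 4 with ha
  set b := f (d-1) 5 with hb
  set c := f (d-1) 4 with hc
  have ha0 : 0 ≤ a := Real.sqrt_nonneg _
  have hb0 : 0 ≤ b := Real.sqrt_nonneg _
  have hc0 : 0 ≤ c := Real.sqrt_nonneg _
  have ha2 : a^2 = (d + 4 - 2)/(d*4) := by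
    rw [ha, f, Real.sq_sqrt]
    apply div_nonneg <;> nlinarith
  have hb2 : b^2 = ((d-1) + 5 - 2)/((d-1)*5) := by
    rw [hb, f, Real.sq_sqrt]
    apply div_nonneg <;> nlinarith
  have hc2 : c^2 = ((d-1) + 4 - 2)/((d-1)*4) := by
    rw [hc, f, Real.sq_sqrt]
    apply div_nonneg <;> nlinarith
  have ha2' : 4*d*a^2 = d+2 := by
    rw [ha2]; field_simp; ring
  have hb2' : 5*(d-1)*b^2 = d+2 := by
    rw [hb2]; field_simp; ring
  have hc2' : 4*(d-1)*c^2 = d+1 := by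
    rw [hc2]; field_simp; ring
  have hbcsq : 20*(d-1)^2*(b*c)^2 = (d+2)*(d+1) := by
    have h := congrArg₂ (· * ·) hb2' hc2'
    linear_combination h
  have htnn : 0 ≤ b*c := mul_nonneg hb0 hc0
  -- upper bound on b*c : 89442*(d-1)*(b*c) ≤ 10000*(2*d+3)
  have hbc : 89442*((d-1)*(b*c)) ≤ 10000*(2*d+3) := by
    nlinarith [hbcsq, mul_nonneg htnn hd1.le, sq_nonneg (89442*((d-1)*(b*c)) - 10000*(2*d+3)), sq_nonneg (89442*((d-1)*(b*c)) + 10000*(2*d+3))]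
  have h1 : 20*d*(d-1)*((d-1)^2*a^2 - b^2 - (d-2)^2*c^2) =
      5*(d-1)^3*(d+2) - 4*d*(d+2) - 5*d*(d-2)^2*(d+1) := by
    linear_combination (5*(d-1)^3)*ha2' - (4*d)*hb2' - (5*d*(d-2)^2)*hc2'
  have hmul : (0:ℝ) ≤ 40*d*(d-2) := by nlinarith
  have h2 : 89442*(40*d*(d-2)*((d-1)*(b*c))) ≤ 40*d*(d-2)*(10000*(2*d+3)) := by
    nlinarith [mul_le_mul_of_nonneg_left hbc hmul]
  have hcubic : 40*d*(d-2)*(10000*(2*d+3)) <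
      89442*(5*(d-1)^3*(d+2) - 4*d*(d+2) - 5*d*(d-2)^2*(d+1)) := by
    have h12 : (0:ℝ) ≤ d - 12 := by linarith
    nlinarith [mul_nonneg (sq_nonneg (d-12)) h12, sq_nonneg (d-12), h12]
  have hK : (0:ℝ) < 89442*(20*d*(d-1)) := by nlinarith
  have e : 89442*(20*d*(d-1)) * ((d-1)^2*a^2 - (b + (d-2)*c)^2) =
      89442*(5*(d-1)^3*(d+2) - 4*d*(d+2) - 5*d*(d-2)^2*(d+1))
      - 89442*(40*d*(d-2)*((d-1)*(b*c))) := by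
    linear_combination (89442:ℝ)*h1
  have hKG : 0 < 89442*(20*d*(d-1)) * ((d-1)^2*a^2 - (b + (d-2)*c)^2) := by
    linarith [e, h2, hcubic]
  have hG : 0 < (d-1)^2*a^2 - (b + (d-2)*c)^2 := by
    by_contra h
    push_neg at h
    nlinarith [hKG, mul_nonneg hK.le (neg_nonneg.mpr h)]
  have hx : 0 ≤ b + (d-2)*c := add_nonneg hb0 (mul_nonneg (by linarith) hc0)
  have hy : 0 ≤ (d-1)*a := mul_nonneg hd1.le ha0
  have hkey : b + (d-2)*c < (d-1)*a := by
    by_contra h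
    push_neg at h
    have hsq := mul_le_mul h h hy hx
    nlinarith [hG, hsq]
  nlinarith [hkey]
end

section
/- For every real d ≥ 9, the quantity −f(d, 3) + f(d − 1, 4) + (d − 3)·(−f(d, 3) + f(d − 1, 3)) + 1/√(d − 1) − 1/√d is strictly negative, where f(x,y) = √((x + y − 2)/(x·y)). -/
lemma div_aux (X Y C B r : ℝ) (hB : 0 < B) (hr : 0 < r) :
    X - (Y*(1/B) + C/(2*r)) = (2*r*(X*B - Y) - C*B)/(B*(2*r)) := by
  field_simp
  ring

lemma quintic_aux (d r : ℝ) (hd : 9 ≤ d) (hr0 : 0 < r) (hr2 : r^2 = d - 1) :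
    0 < 2*r*((d - 1/9 - 1.7321*(d+1/2)/2)*(2*d-1/9) - (d-3)) - 1.7321*(2*d-1/9) := by
  have hd' : d = r^2 + 1 := by linarith
  subst hd'
  have hrge : (2.8284:ℝ) ≤ r := by nlinarith
  have h : 0 ≤ r - 2.8284 := by linarith
  nlinarith [mul_nonneg h h, mul_nonneg (mul_nonneg h h) h,
    mul_nonneg h (sq_nonneg r), mul_nonneg (mul_nonneg h h) (sq_nonneg r),
    mul_nonneg (mul_nonneg h h) (mul_nonneg h h), mul_nonneg h (le_of_lt hr0)]

lemma reduction_aux (d p q r s : ℝ) (hd : 9 ≤ d)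
  (hp0 : 0 < p) (hq0 : 0 < q) (hr0 : 0 < r) (hs0 : 0 < s)
  (hp2 : p^2 = d+1) (hq2 : q^2 = d) (hr2 : r^2 = d-1) (hs2 : s^2 = 3) :
    s*p*q/2 + (d-3)*(q^2 - p*r) + s*(q - r) < p*r := by
  have hd0 : (0:ℝ) < d := by linarith
  have h1 : (q^2 - p*r) * (q^2 + p*r) = 1 := by nlinarith [sq_nonneg (p*r)]
  have h2 : (q - r) * (q + r) = 1 := by nlinarith
  have hi0 : 0 < 1/d := by positivity
  have hi9 : 1/d ≤ 1/9 := by apply one_div_le_one_div_of_le <;> linarith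
  have hi : d * (1/d) = 1 := by field_simp
  have hpr : d - 1/9 ≤ p*r := by
    nlinarith [mul_pos hp0 hr0, mul_pos hi0 hi0,
      mul_le_of_le_one_right (le_of_lt hi0) (by linarith : 1/d ≤ 1)]
  have hpq : p*q ≤ d + 1/2 := by nlinarith [mul_pos hp0 hq0]
  have hsle : s ≤ 1.7321 := by nlinarith
  have hrq : r ≤ q := by nlinarith
  -- term A
  have hA : s*p*q/2 ≤ 1.7321*(d+1/2)/2 := by
    have := mul_le_mul hsle hpq (by positivity) (by norm_num)
    nlinarith
  -- term B
  have hsum0 : 0 < q^2 + p*r := by positivity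
  have hsum : 2*d - 1/9 ≤ q^2 + p*r := by rw [hq2]; linarith
  have hql : q^2 - p*r = 1/(q^2 + p*r) := by
    field_simp
    linarith [h1]
  have h2d : (0:ℝ) < 2*d - 1/9 := by linarith
  have hB : (d-3)*(q^2 - p*r) ≤ (d-3)*(1/(2*d - 1/9)) := by
    rw [hql]
    exact mul_le_mul_of_nonneg_left (one_div_le_one_div_of_le h2d hsum) (by linarith)
  -- term C
  have hqr' : q - r = 1/(q + r) := by
    field_simp
    linarith [h2]
  have hC : s*(q - r) ≤ 1.7321/(2*r) := by
    have h1r : q - r ≤ 1/(2*r) := by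
      rw [hqr']
      gcongr
      linarith
    have hqrnn : 0 ≤ q - r := by linarith
    calc s*(q-r) ≤ 1.7321*(q-r) := mul_le_mul_of_nonneg_right hsle hqrnn
      _ ≤ 1.7321*(1/(2*r)) := mul_le_mul_of_nonneg_left h1r (by norm_num)
      _ = 1.7321/(2*r) := by ring
  -- final
  have hF := quintic_aux d r hd hr0 hr2
  have key : (d-3)*(1/(2*d - 1/9)) + 1.7321/(2*r) < d - 1/9 - 1.7321*(d+1/2)/2 := by
    have heq := div_aux (d - 1/9 - 1.7321*(d+1/2)/2) (d-3) 1.7321 (2*d-1/9) r h2d hr0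
    have : 0 < d - 1/9 - 1.7321*(d+1/2)/2 - ((d-3)*(1/(2*d - 1/9)) + 1.7321/(2*r)) := by
      rw [heq]; positivity
    linarith
  linarith

theorem stmt9 (d : ℝ) (hd : 9 ≤ d) :
    -f d 3 + f (d - 1) 4 + (d - 3) * (-f d 3 + f (d - 1) 3)
      + 1 / Real.sqrt (d - 1) - 1 / Real.sqrt d < 0 := by
  have hd0 : (0:ℝ) < d := by linarith
  have hd1 : (0:ℝ) < d - 1 := by linarith
  set p := Real.sqrt (d+1) with hpdef
  set q := Real.sqrt d with hqdef
  set r := Real.sqrt (d-1) with hrdef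
  set s := Real.sqrt 3 with hsdef
  have hp0 : 0 < p := Real.sqrt_pos.2 (by linarith)
  have hq0 : 0 < q := Real.sqrt_pos.2 hd0
  have hr0 : 0 < r := Real.sqrt_pos.2 hd1
  have hs0 : 0 < s := Real.sqrt_pos.2 (by norm_num)
  have hp2 : p^2 = d+1 := Real.sq_sqrt (by linarith)
  have hq2 : q^2 = d := Real.sq_sqrt (by linarith)
  have hr2 : r^2 = d-1 := Real.sq_sqrt (by linarith)
  have hs2 : s^2 = 3 := Real.sq_sqrt (by norm_num)
  have e1 : f d 3 = p / (s * q) := by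
    rw [f, show d + 3 - 2 = d + 1 by ring, show d * 3 = 3 * d by ring,
      Real.sqrt_div (by linarith), Real.sqrt_mul (by norm_num)]
  have e2 : f (d-1) 4 = p / (2 * r) := by
    rw [f, show d - 1 + 4 - 2 = d + 1 by ring, show (d-1) * 4 = 4 * (d-1) by ring,
      Real.sqrt_div (by linarith), Real.sqrt_mul (by norm_num),
      show Real.sqrt 4 = 2 by rw [show (4:ℝ) = 2^2 by norm_num, Real.sqrt_sq]; norm_num]
  have e3 : f (d-1) 3 = q / (s * r) := by
    rw [f, show d - 1 + 3 - 2 = d by ring, show (d-1) * 3 = 3 * (d-1) by ring,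
      Real.sqrt_div (by linarith), Real.sqrt_mul (by norm_num)]
  rw [e1, e2, e3]
  have hred := reduction_aux d p q r s hd hp0 hq0 hr0 hs0 hp2 hq2 hr2 hs2
  have heq : -(p / (s * q)) + p / (2 * r) + (d - 3) * (-(p / (s * q)) + q / (s * r))
      + 1 / r - 1 / q
      = (s*p*q/2 + (d-3)*(q^2 - p*r) + s*(q - r) - p*r) / (s*q*r) := by
    field_simp
    ring
  rw [heq]
  apply div_neg_of_neg_of_pos (by linarith) (by positivity)
end

section
/- For every real d ≥ 7, the quantity −f(d, 3) + f(d − 1, 4) + (d − 1)·(−f(d, 3) + f(d − 1, 3)) is strictly negative, where f(x,y) = √((x + y − 2)/(x·y)). -/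
theorem stmt10 (d : ℝ) (hd : 7 ≤ d) :
    -f d 3 + f (d - 1) 4 + (d - 1) * (-f d 3 + f (d - 1) 3) < 0 := by
  have hd0 : (0:ℝ) < d := by linarith
  have hd1 : (0:ℝ) < d - 1 := by linarith
  simp only [f]
  set a := Real.sqrt ((d + 3 - 2) / (d * 3)) with ha_def
  set b := Real.sqrt ((d - 1 + 4 - 2) / ((d - 1) * 4)) with hb_def
  set c := Real.sqrt ((d - 1 + 3 - 2) / ((d - 1) * 3)) with hc_def
  have apos : 0 < a := Real.sqrt_pos.mpr (div_pos (by linarith) (by linarith))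
  have bpos : 0 < b := Real.sqrt_pos.mpr (div_pos (by linarith) (by linarith))
  have cpos : 0 < c := Real.sqrt_pos.mpr (div_pos (by linarith) (by linarith))
  have ha2 : a ^ 2 = (d + 3 - 2) / (d * 3) :=
    Real.sq_sqrt (le_of_lt (div_pos (by linarith) (by linarith)))
  have hb2 : b ^ 2 = (d - 1 + 4 - 2) / ((d - 1) * 4) :=
    Real.sq_sqrt (le_of_lt (div_pos (by linarith) (by linarith)))
  have hc2 : c ^ 2 = (d - 1 + 3 - 2) / ((d - 1) * 3) :=
    Real.sq_sqrt (le_of_lt (div_pos (by linarith) (by linarith)))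
  have hA : a ^ 2 * (3 * d) = d + 1 := by
    rw [ha2]; field_simp; ring
  have hB : b ^ 2 * (4 * (d - 1)) = d + 1 := by
    rw [hb2]; field_simp; ring
  have hC : c ^ 2 * (3 * (d - 1)) = d := by
    rw [hc2]; field_simp; ring
  have hba : b < a := by
    apply Real.sqrt_lt_sqrt (le_of_lt (div_pos (by linarith) (by linarith)))
    rw [div_lt_div_iff₀ (by linarith) (by linarith)]
    nlinarith
  have hac : a < c := by
    apply Real.sqrt_lt_sqrt (le_of_lt (div_pos (by linarith) (by linarith)))
    rw [div_lt_div_iff₀ (by linarith) (by linarith)]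
    nlinarith
  have hsum1 : 0 < c + a := by linarith
  have hsum2 : 0 < a + b := by linarith
  have hca : (c - a) * (c + a) * (3 * d * (d - 1)) = 1 := by
    linear_combination d * hC - (d - 1) * hA
  have hab : (a - b) * (a + b) * (12 * d * (d - 1)) = (d + 1) * (d - 4) := by
    linear_combination 4 * (d - 1) * hA - 3 * d * hB
  have key2 : 4 * (d - 1) * (a + b) < (d + 1) * (d - 4) * (c + a) := by
    calc 4 * (d - 1) * (a + b) < 4 * (d - 1) * (c + a) :=
          mul_lt_mul_of_pos_left (by linarith) (by linarith)
      _ ≤ (d + 1) * (d - 4) * (c + a) :=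
          mul_le_mul_of_nonneg_right (by nlinarith) (le_of_lt hsum1)
  have h1 : c - a = 1 / (3 * d * (d - 1) * (c + a)) := by
    field_simp
    linear_combination hca
  have h2 : a - b = (d + 1) * (d - 4) / (12 * d * (d - 1) * (a + b)) := by
    field_simp
    linear_combination hab
  have key : (d - 1) * (c - a) < a - b := by
    rw [h1, h2, mul_one_div, div_lt_div_iff₀ (by positivity) (by positivity)]
    have h3 : (0:ℝ) < 3 * d * (d - 1) := by positivity
    calc (d - 1) * (12 * d * (d - 1) * (a + b))
        = (3 * d * (d - 1)) * (4 * (d - 1) * (a + b)) := by ring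
      _ < (3 * d * (d - 1)) * ((d + 1) * (d - 4) * (c + a)) :=
          mul_lt_mul_of_pos_left key2 h3
      _ = (d + 1) * (d - 4) * (3 * d * (d - 1) * (c + a)) := by ring
  calc -a + b + (d - 1) * (-a + c) = (d - 1) * (c - a) - (a - b) := by ring
    _ < 0 := by linarith
end

section
/- The quantity −3·f(3,3) + f(3,4) + f(3,2) + f(4,3) is strictly negative (its value is approximately −0.0018988), where f(x,y) = √((x + y − 2)/(x·y)). -/
theorem stmt11 : -3 * f 3 3 + f 3 4 + f 3 2 + f 4 3 < 0 := by
  have h1 : f 3 3 = 2/3 := by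
    unfold f
    rw [show ((3:ℝ) + 3 - 2) / (3 * 3) = (2/3)^2 by norm_num]
    exact Real.sqrt_sq (by norm_num)
  have h2 : f 3 4 < 0.6456 := by
    unfold f
    rw [show Real.sqrt ((3 + 4 - 2) / (3 * 4)) < 0.6456 ↔ _ from
      Real.sqrt_lt' (by norm_num)]
    norm_num
  have h3 : f 4 3 < 0.6456 := by
    unfold f
    rw [Real.sqrt_lt' (by norm_num : (0:ℝ) < 0.6456)]
    norm_num
  have h4 : f 3 2 < 0.70711 := by
    unfold f
    rw [Real.sqrt_lt' (by norm_num : (0:ℝ) < 0.70711)]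
    norm_num
  linarith
end

section
/- The quantity (1/√11 − 1/√13) + 5·(−f(3,13) + f(4,11)) + 7·(−f(3,13) + f(3,11)) − 2·f(13,3) + f(3,2) + f(2,1) is strictly negative (less than −0.0107), where f(x,y) = √((x + y − 2)/(x·y)). -/
theorem stmt14 :
    (1 / Real.sqrt 11 - 1 / Real.sqrt 13) + 5 * (-f 3 13 + f 4 11)
      + 7 * (-f 3 13 + f 3 11) - 2 * f 13 3 + f 3 2 + f 2 1 < 0 := by
  have e1 : 1 / Real.sqrt 11 = Real.sqrt (1/11) := by
    rw [one_div, ← Real.sqrt_inv]; norm_num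
  have e2 : 1 / Real.sqrt 13 = Real.sqrt (1/13) := by
    rw [one_div, ← Real.sqrt_inv]; norm_num
  have h1 : Real.sqrt (1/11) < 0.3015114 :=
    (Real.sqrt_lt' (by norm_num)).2 (by norm_num)
  have h2 : (0.27735 : ℝ) < Real.sqrt (1/13) :=
    (Real.lt_sqrt (by norm_num)).2 (by norm_num)
  have h3 : (0.5991446 : ℝ) < Real.sqrt (14/39) :=
    (Real.lt_sqrt (by norm_num)).2 (by norm_num)
  have h4 : Real.sqrt (13/44) < 0.5435574 :=
    (Real.sqrt_lt' (by norm_num)).2 (by norm_num)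
  have h5 : Real.sqrt (12/33) < 0.6030227 :=
    (Real.sqrt_lt' (by norm_num)).2 (by norm_num)
  have h6 : Real.sqrt (3/6) < 0.7071068 :=
    (Real.sqrt_lt' (by norm_num)).2 (by norm_num)
  have h7 : Real.sqrt (1/2) < 0.7071068 :=
    (Real.sqrt_lt' (by norm_num)).2 (by norm_num)
  have e3 : f 3 13 = Real.sqrt (14/39) := by unfold f; norm_num
  have e4 : f 4 11 = Real.sqrt (13/44) := by unfold f; norm_num
  have e5 : f 3 11 = Real.sqrt (12/33) := by unfold f; norm_num
  have e6 : f 13 3 = Real.sqrt (14/39) := by unfold f; norm_num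
  have e7 : f 3 2 = Real.sqrt (3/6) := by unfold f; norm_num
  have e8 : f 2 1 = Real.sqrt (1/2) := by unfold f; norm_num
  rw [e1, e2, e3, e4, e5, e6, e7, e8]
  linarith
end

section
/- For all real x₁, x₂ with 3 ≤ x₁ ≤ x₂ and all real d ≥ 5, f(x₂, d − 2) − f(x₂, d) ≥ f(x₁, d − 2) − f(x₁, d); in particular f(4, d − 2) − f(4, d) ≥ f(3, d − 2) − f(3, d), where f(x,y) = √((x + y − 2)/(x·y)). -/
lemma f_sq (x y : ℝ) (hx : 0 < x) (hy : 0 < y) (h : 0 ≤ x + y - 2) :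
    (f x y) ^ 2 = (x + y - 2) / (x * y) :=
  Real.sq_sqrt (div_nonneg h (mul_pos hx hy).le)

lemma f_pos (x y : ℝ) (hx : 0 < x) (hy : 0 < y) (h : 0 < x + y - 2) :
    0 < f x y :=
  Real.sqrt_pos.mpr (div_pos h (mul_pos hx hy))

lemma key (x d : ℝ) (hx : 3 ≤ x) (hd : 5 ≤ d) :
    (d - 4) * d * f x d ≤ (d - 2) ^ 2 * f x (d - 2) := by
  have hx0 : (0:ℝ) < x := by linarith
  have hd0 : (0:ℝ) < d := by linarith
  have hd2 : (0:ℝ) < d - 2 := by linarith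
  have hA : (f x (d - 2)) ^ 2 = (x + (d - 2) - 2) / (x * (d - 2)) :=
    f_sq x (d - 2) hx0 hd2 (by linarith)
  have hC : (f x d) ^ 2 = (x + d - 2) / (x * d) :=
    f_sq x d hx0 hd0 (by linarith)
  have hfA : 0 ≤ f x (d - 2) := Real.sqrt_nonneg _
  have hfC : 0 ≤ f x d := Real.sqrt_nonneg _
  have hL : 0 ≤ (d - 4) * d * f x d := by
    have : (0:ℝ) ≤ (d - 4) * d := by nlinarith
    exact mul_nonneg this hfC
  have hR : 0 ≤ (d - 2) ^ 2 * f x (d - 2) := mul_nonneg (by positivity) hfA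
  have hfrac : ((d - 4) * d) ^ 2 * ((x + d - 2) / (x * d)) ≤
      ((d - 2) ^ 2) ^ 2 * ((x + (d - 2) - 2) / (x * (d - 2))) := by
    rw [mul_div_assoc', mul_div_assoc', div_le_div_iff₀ (by positivity) (by positivity)]
    have inner : 0 ≤ x * (2 * (d ^ 2 - 2 * d - 4)) + 4 * (d - 2) * (d - 4) := by
      nlinarith
    have key2 : 0 ≤ x * d * (d - 2) *
        (x * (2 * (d ^ 2 - 2 * d - 4)) + 4 * (d - 2) * (d - 4)) :=
      mul_nonneg (by positivity) inner
    nlinarith [key2]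
  have h2 : ((d - 4) * d * f x d) ^ 2 ≤ ((d - 2) ^ 2 * f x (d - 2)) ^ 2 := by
    calc ((d - 4) * d * f x d) ^ 2 = ((d - 4) * d) ^ 2 * (f x d) ^ 2 := by ring
      _ = ((d - 4) * d) ^ 2 * ((x + d - 2) / (x * d)) := by rw [hC]
      _ ≤ ((d - 2) ^ 2) ^ 2 * ((x + (d - 2) - 2) / (x * (d - 2))) := hfrac
      _ = ((d - 2) ^ 2 * f x (d - 2)) ^ 2 := by rw [← hA]; ring
  have h3 := Real.sqrt_le_sqrt h2
  rwa [Real.sqrt_sq hL, Real.sqrt_sq hR] at h3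

theorem stmt15 (x₁ x₂ d : ℝ) (hx₁ : 3 ≤ x₁) (hx : x₁ ≤ x₂) (hd : 5 ≤ d) :
    f x₁ (d - 2) - f x₁ d ≤ f x₂ (d - 2) - f x₂ d := by
  have hx₂ : 3 ≤ x₂ := le_trans hx₁ hx
  have hx₁0 : (0:ℝ) < x₁ := by linarith
  have hx₂0 : (0:ℝ) < x₂ := by linarith
  have hd0 : (0:ℝ) < d := by linarith
  have hd2 : (0:ℝ) < d - 2 := by linarith
  set a₁ := f x₁ (d - 2) with ha₁
  set a₂ := f x₂ (d - 2) with ha₂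
  set c₁ := f x₁ d with hc₁
  set c₂ := f x₂ d with hc₂
  have pa₁ : 0 < a₁ := f_pos _ _ hx₁0 hd2 (by linarith)
  have pa₂ : 0 < a₂ := f_pos _ _ hx₂0 hd2 (by linarith)
  have pc₁ : 0 < c₁ := f_pos _ _ hx₁0 hd0 (by linarith)
  have pc₂ : 0 < c₂ := f_pos _ _ hx₂0 hd0 (by linarith)
  have e₁ : a₁ ^ 2 * (x₁ * (d - 2)) = x₁ + d - 4 := by
    rw [ha₁, f_sq x₁ (d - 2) hx₁0 hd2 (by linarith)]
    field_simp
    try ring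
  have e₂ : a₂ ^ 2 * (x₂ * (d - 2)) = x₂ + d - 4 := by
    rw [ha₂, f_sq x₂ (d - 2) hx₂0 hd2 (by linarith)]
    field_simp
    try ring
  have e₃ : c₁ ^ 2 * (x₁ * d) = x₁ + d - 2 := by
    rw [hc₁, f_sq x₁ d hx₁0 hd0 (by linarith)]
    field_simp
    try ring
  have e₄ : c₂ ^ 2 * (x₂ * d) = x₂ + d - 2 := by
    rw [hc₂, f_sq x₂ d hx₂0 hd0 (by linarith)]
    field_simp
    try ring
  have hA : (a₁ - a₂) * ((a₁ + a₂) * (x₁ * x₂ * (d - 2))) = (d - 4) * (x₂ - x₁) := by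
    linear_combination x₂ * e₁ - x₁ * e₂
  have hC : (c₁ - c₂) * ((c₁ + c₂) * (x₁ * x₂ * d)) = (d - 2) * (x₂ - x₁) := by
    linear_combination x₂ * e₃ - x₁ * e₄
  have k₁ : (d - 4) * d * c₁ ≤ (d - 2) ^ 2 * a₁ := key x₁ d hx₁ hd
  have k₂ : (d - 4) * d * c₂ ≤ (d - 2) ^ 2 * a₂ := key x₂ d hx₂ hd
  -- combine
  have hsum : (d - 4) * d * (c₁ + c₂) ≤ (d - 2) ^ 2 * (a₁ + a₂) := by nlinarith
  have hstep : (d - 4) * (x₂ - x₁) * (d * (c₁ + c₂)) ≤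
      (d - 2) * (x₂ - x₁) * ((d - 2) * (a₁ + a₂)) := by
    have hxx : 0 ≤ x₂ - x₁ := by linarith
    nlinarith [mul_le_mul_of_nonneg_left hsum hxx]
  have hpos : 0 < (a₁ + a₂) * (c₁ + c₂) * (x₁ * x₂ * d * (d - 2)) := by positivity
  have hfin : (a₁ - a₂) * ((a₁ + a₂) * (c₁ + c₂) * (x₁ * x₂ * d * (d - 2))) ≤
      (c₁ - c₂) * ((a₁ + a₂) * (c₁ + c₂) * (x₁ * x₂ * d * (d - 2))) := by
    calc (a₁ - a₂) * ((a₁ + a₂) * (c₁ + c₂) * (x₁ * x₂ * d * (d - 2)))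
        = (d - 4) * (x₂ - x₁) * (d * (c₁ + c₂)) := by linear_combination (d * (c₁ + c₂)) * hA
      _ ≤ (d - 2) * (x₂ - x₁) * ((d - 2) * (a₁ + a₂)) := hstep
      _ = (c₁ - c₂) * ((a₁ + a₂) * (c₁ + c₂) * (x₁ * x₂ * d * (d - 2))) := by
          linear_combination (-(d - 2) * (a₁ + a₂)) * hC
  have hfinal : a₁ - a₂ ≤ c₁ - c₂ := (mul_le_mul_iff_of_pos_right hpos).mp hfin
  linarith
end

section
/- The function g₁(d) = 4·(−f(3, d) + f(4, d − 2)) − 2·f(d, 3) + f(3, 2) + f(2, 1) is monotonically decreasing for real d > 2, where f(x,y) = √((x + y − 2)/(x·y)). -/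
lemma sqrt3_sq : Real.sqrt 3 * Real.sqrt 3 = 3 := Real.mul_self_sqrt (by norm_num)

lemma simp_g (d : ℝ) (hd : 2 < d) :
    4 * (-f 3 d + f 4 (d - 2)) - 2 * f d 3 =
      -(2 * Real.sqrt 3 * Real.sqrt ((d + 1) / d)) + 2 * Real.sqrt (d / (d - 2)) := by
  have hd0 : (0:ℝ) < d := by linarith
  have hd2 : (0:ℝ) < d - 2 := by linarith
  have h1 : (3 + d - 2) / (3 * d) = ((d + 1) / d) / 3 := by field_simp; ring
  have h2 : (d + 3 - 2) / (d * 3) = ((d + 1) / d) / 3 := by field_simp; ring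
  have h3 : (4 + (d - 2) - 2) / (4 * (d - 2)) = (d / (d - 2)) / 4 := by field_simp; ring
  have hx : (0:ℝ) ≤ (d + 1) / d := by positivity
  have hy : (0:ℝ) ≤ d / (d - 2) := by positivity
  unfold f
  rw [h1, h2, h3, Real.sqrt_div hx, Real.sqrt_div hy]
  have h4 : Real.sqrt 4 = 2 := by
    rw [show (4:ℝ) = 2^2 by norm_num, Real.sqrt_sq (by norm_num)]
  rw [h4]
  have h3pos : (0:ℝ) < Real.sqrt 3 := Real.sqrt_pos.mpr (by norm_num)
  have e : Real.sqrt ((d+1)/d) / Real.sqrt 3 = Real.sqrt 3 * Real.sqrt ((d+1)/d) / 3 := by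
    rw [div_eq_div_iff h3pos.ne' (by norm_num)]
    linear_combination (-Real.sqrt ((d+1)/d)) * sqrt3_sq
  rw [e]; ring

lemma sq_gt_one (x : ℝ) (h0 : 0 ≤ x) (h1 : 1 < x * x) : 1 < x := by nlinarith

lemma sq_lt (x c : ℝ) (h0 : 0 ≤ x) (he : x * x = c) (h1 : 1 < c) : x < c := by nlinarith

lemma diffpos (x s r : ℝ) (h : x * s = r) (hs : 0 < s) (hr : 0 < r) : 0 < x := by
  nlinarith

lemma key'_s16 (a b sa sb ta tb s3 : ℝ) (ha : 2 < a) (hab : a < b)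
    (hsa2 : sa * sa = a / (a - 2)) (hsb2 : sb * sb = b / (b - 2))
    (hta2 : ta * ta = (a + 1) / a) (htb2 : tb * tb = (b + 1) / b)
    (hsa0 : 0 ≤ sa) (hsb0 : 0 ≤ sb) (hta0 : 0 ≤ ta) (htb0 : 0 ≤ tb)
    (hs30 : 0 ≤ s3) (hs32 : s3 < 2) :
    s3 * (ta - tb) < sa - sb := by
  have ha0 : (0:ℝ) < a := by linarith
  have hb0 : (0:ℝ) < b := by linarith
  have ha2 : (0:ℝ) < a - 2 := by linarith
  have hb2 : (0:ℝ) < b - 2 := by linarith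
  have hxa : 1 < a / (a - 2) := by rw [lt_div_iff₀ ha2]; linarith
  have hxb : 1 < b / (b - 2) := by rw [lt_div_iff₀ hb2]; linarith
  have hya : 1 < (a + 1) / a := by rw [lt_div_iff₀ ha0]; linarith
  have hyb : 1 < (b + 1) / b := by rw [lt_div_iff₀ hb0]; linarith
  have hsa_lt : sa < a / (a - 2) := sq_lt sa _ hsa0 hsa2 hxa
  have hsb_lt : sb < b / (b - 2) := sq_lt sb _ hsb0 hsb2 hxb
  have hsa_gt : 1 < sa := sq_gt_one sa hsa0 (by rw [hsa2]; exact hxa)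
  have hsb_gt : 1 < sb := sq_gt_one sb hsb0 (by rw [hsb2]; exact hxb)
  have hta_gt : 1 < ta := sq_gt_one ta hta0 (by rw [hta2]; exact hya)
  have htb_gt : 1 < tb := sq_gt_one tb htb0 (by rw [htb2]; exact hyb)
  have hdiff1 : (sa - sb) * (sa + sb) = 2 * (b - a) / ((a - 2) * (b - 2)) := by
    have h : a / (a - 2) - b / (b - 2) = 2 * (b - a) / ((a - 2) * (b - 2)) := by
      field_simp; ring
    linear_combination hsa2 - hsb2 + h
  have hdiff2 : (ta - tb) * (ta + tb) = (b - a) / (a * b) := by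
    have h : (a + 1) / a - (b + 1) / b = (b - a) / (a * b) := by
      field_simp; ring
    linear_combination hta2 - htb2 + h
  have hpos1 : 0 < sa + sb := by linarith
  have hpos2 : 0 < ta + tb := by linarith
  have hsd : 0 < sa - sb :=
    diffpos _ _ _ hdiff1 hpos1 (div_pos (by linarith) (mul_pos ha2 hb2))
  have htd : 0 < ta - tb :=
    diffpos _ _ _ hdiff2 hpos2 (div_pos (by linarith) (mul_pos ha0 hb0))
  -- middle value : (b - a) / (a * b)
  have hmid1 : (b - a) / (a * b) < sa - sb := by
    have hsum : sa + sb < 2 * a * b / ((a - 2) * (b - 2)) := by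
      have h1 : a / (a - 2) < a * b / ((a - 2) * (b - 2)) := by
        rw [div_lt_div_iff₀ ha2 (by positivity)]; nlinarith
      have h2 : b / (b - 2) < a * b / ((a - 2) * (b - 2)) := by
        rw [div_lt_div_iff₀ hb2 (by positivity)]; nlinarith
      have e : 2 * a * b / ((a - 2) * (b - 2))
          = a * b / ((a - 2) * (b - 2)) + a * b / ((a - 2) * (b - 2)) := by ring
      rw [e]
      exact add_lt_add (hsa_lt.trans h1) (hsb_lt.trans h2)
    have hdiff1' : (sa - sb) * (sa + sb) * ((a - 2) * (b - 2)) = 2 * (b - a) := by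
      rw [eq_div_iff (by positivity : ((a - 2) * (b - 2)) ≠ 0)] at hdiff1
      linarith [hdiff1]
    rw [lt_div_iff₀ (by positivity : (0:ℝ) < (a - 2) * (b - 2))] at hsum
    rw [div_lt_iff₀ (mul_pos ha0 hb0)]
    have h5 := mul_lt_mul_of_pos_left hsum hsd
    have h6 : 2 * (b - a) < (sa - sb) * (2 * a * b) := by
      calc 2 * (b - a) = (sa - sb) * ((sa + sb) * ((a - 2) * (b - 2))) := by
            rw [← hdiff1']; ring
        _ < (sa - sb) * (2 * a * b) := h5
    have h7 : (sa - sb) * (2 * a * b) = 2 * ((sa - sb) * (a * b)) := by ring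
    linarith
  have hmid2 : s3 * (ta - tb) < (b - a) / (a * b) := by
    calc s3 * (ta - tb) < 2 * (ta - tb) := mul_lt_mul_of_pos_right hs32 htd
      _ ≤ (ta + tb) * (ta - tb) := mul_le_mul_of_nonneg_right (by linarith) htd.le
      _ = (b - a) / (a * b) := by rw [← hdiff2]; ring
  linarith

lemma key_s16 (a b : ℝ) (ha : 2 < a) (hab : a < b) :
    Real.sqrt 3 * (Real.sqrt ((a + 1) / a) - Real.sqrt ((b + 1) / b)) <
      Real.sqrt (a / (a - 2)) - Real.sqrt (b / (b - 2)) := by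
  have ha0 : (0:ℝ) < a := by linarith
  have hb0 : (0:ℝ) < b := by linarith
  have ha2 : (0:ℝ) < a - 2 := by linarith
  have hb2 : (0:ℝ) < b - 2 := by linarith
  refine key'_s16 a b _ _ _ _ _ ha hab
    (Real.mul_self_sqrt (by positivity)) (Real.mul_self_sqrt (by positivity))
    (Real.mul_self_sqrt (by positivity)) (Real.mul_self_sqrt (by positivity))
    (Real.sqrt_nonneg _) (Real.sqrt_nonneg _) (Real.sqrt_nonneg _) (Real.sqrt_nonneg _)
    (Real.sqrt_nonneg _) ?_
  nlinarith [sqrt3_sq, Real.sqrt_nonneg (3:ℝ)]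

theorem stmt16 :
    StrictAntiOn (fun d : ℝ => 4 * (-f 3 d + f 4 (d - 2)) - 2 * f d 3 + f 3 2 + f 2 1)
      (Set.Ioi (2 : ℝ)) := by
  intro a ha b hb hab
  simp only [Set.mem_Ioi] at ha hb
  simp only
  rw [simp_g a ha, simp_g b hb]
  have := key_s16 a b ha hab
  linarith
end

section
/- The function g(d) = −f(d, 8) + f(2, 1) + 5·(−f(3, 8) + f(4, d + 4)) − f(3, 8) + f(4, 2) − f(3, 8) + f(2, 1) + (d − 2)·(−f(3, 8) + f(3, d + 4)) satisfies g(d) ≤ g(8) < 0 for all real d ≥ 8, where f(x,y) = √((x + y − 2)/(x·y)). -/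
lemma sqrt_le_of_sq {x b : ℝ} (hb : 0 ≤ b) (h : x ≤ b^2) : Real.sqrt x ≤ b := by
  calc Real.sqrt x ≤ Real.sqrt (b^2) := Real.sqrt_le_sqrt h
  _ = b := Real.sqrt_sq hb

lemma le_sqrt_of_sq {x b : ℝ} (hb : 0 ≤ b) (h : b^2 ≤ x) : b ≤ Real.sqrt x := by
  calc b = Real.sqrt (b^2) := (Real.sqrt_sq hb).symm
  _ ≤ Real.sqrt x := Real.sqrt_le_sqrt h

set_option maxHeartbeats 1000000 in
theorem stmt17 :
    let g : ℝ → ℝ := fun d =>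
      -f d 8 + f 2 1 + 5 * (-f 3 8 + f 4 (d + 4)) - f 3 8 + f 4 2 - f 3 8 + f 2 1
        + (d - 2) * (-f 3 8 + f 3 (d + 4))
    (∀ d : ℝ, 8 ≤ d → g d ≤ g 8) ∧ g 8 < 0 := by
  intro g
  have hgd : ∀ d : ℝ, g d = -Real.sqrt ((d+6)/(8*d)) + 3*Real.sqrt (1/2) - 7*Real.sqrt (3/8)
      + 5*Real.sqrt ((d+6)/(4*(d+4)))
      + (d-2)*(Real.sqrt ((d+5)/(3*(d+4))) - Real.sqrt (3/8)) := by
    intro d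
    simp only [g, f]
    rw [show (d+8-2)/(d*8) = (d+6)/(8*d) by ring,
        show ((2:ℝ)+1-2)/(2*1) = 1/2 by norm_num,
        show ((3:ℝ)+8-2)/(3*8) = 3/8 by norm_num,
        show (4+(d+4)-2)/(4*(d+4)) = (d+6)/(4*(d+4)) by ring,
        show ((4:ℝ)+2-2)/(4*2) = 1/2 by norm_num,
        show (3+(d+4)-2)/(3*(d+4)) = (d+5)/(3*(d+4)) by ring]
    ring
  have hg8 : g 8 = -Real.sqrt (7/32) + 3*Real.sqrt (1/2) - 7*Real.sqrt (3/8)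
      + 5*Real.sqrt (7/24) + 6*(Real.sqrt (13/36) - Real.sqrt (3/8)) := by
    rw [hgd 8]
    norm_num
  -- constants
  set s := Real.sqrt (3/8) with hs_def
  set u := Real.sqrt (13/36) with hu_def
  set q := Real.sqrt (7/32) with hq_def
  set r := Real.sqrt (7/24) with hr_def
  have hs2 : s^2 = 3/8 := Real.sq_sqrt (by norm_num)
  have hu2 : u^2 = 13/36 := Real.sq_sqrt (by norm_num)
  have hq2 : q^2 = 7/32 := Real.sq_sqrt (by norm_num)
  have hsu_ub : s + u ≤ 1.2134 := by
    have h1 : s ≤ 0.61238 := sqrt_le_of_sq (by norm_num) (by norm_num)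
    have h2 : u ≤ 0.60093 := sqrt_le_of_sq (by norm_num) (by norm_num)
    linarith
  have hsu_pos : 0 < s + u := by
    have h1 : (0.61237:ℝ) ≤ s := le_sqrt_of_sq (by norm_num) (by norm_num)
    have h2 : 0 ≤ u := Real.sqrt_nonneg _
    linarith
  have hqL : (0.4677:ℝ) ≤ q := le_sqrt_of_sq (by norm_num) (by norm_num)
  constructor
  · intro d hd
    rw [hgd d, hg8]
    have hd0 : (0:ℝ) < d := by linarith
    set a := Real.sqrt ((d+6)/(8*d)) with ha_def
    set b := Real.sqrt ((d+6)/(4*(d+4))) with hb_def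
    set c := Real.sqrt ((d+5)/(3*(d+4))) with hc_def
    have ha2 : a^2 = (d+6)/(8*d) := Real.sq_sqrt (by positivity)
    have hc2 : c^2 = (d+5)/(3*(d+4)) := Real.sq_sqrt (by positivity)
    have ha2' : a^2*(8*d) = d+6 := by
      rw [ha2, div_mul_cancel₀]
      positivity
    have hc2' : c^2*(3*(d+4)) = d+5 := by
      rw [hc2, div_mul_cancel₀]
      positivity
    -- b ≤ r
    have hbr : b ≤ r := by
      apply Real.sqrt_le_sqrt
      rw [div_le_div_iff₀ (by linarith) (by norm_num)]
      nlinarith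
    -- c ≤ u
    have hcu : c ≤ u := by
      apply Real.sqrt_le_sqrt
      rw [div_le_div_iff₀ (by linarith) (by norm_num)]
      nlinarith
    -- q - a ≤ 0.0143*(d-8)
    have haL : (0.3535:ℝ) ≤ a := by
      apply le_sqrt_of_sq (by norm_num)
      rw [le_div_iff₀ (by positivity)]
      nlinarith
    have ht : (0:ℝ) ≤ d - 8 := by linarith
    have hqa : q - a ≤ 0.0143*(d-8) := by
      have key : (q - a)*((q + a)*(32*d)) = 3*(d-8) := by
        linear_combination (32*d)*hq2 - 4*ha2'
      have hX : (0:ℝ) ≤ q + a - 0.8212 := by linarith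
      have hDA : (0:ℝ) ≤ d*(q+a) - 6.5696 := by nlinarith [mul_nonneg ht hX]
      have hpos : (0:ℝ) < (q + a)*(32*d) := by
        have : (0:ℝ) < q + a := by linarith
        positivity
      have hb1 : (q - a)*((q + a)*(32*d)) ≤ 0.0143*(d-8)*((q + a)*(32*d)) := by
        rw [key]
        nlinarith [mul_nonneg ht hDA]
      exact le_of_mul_le_mul_right hb1 hpos
    -- main: (d-2)*(c-s) - 6*(u-s) ≤ -(0.0143*(d-8))
    have hmain : (d-2)*(c-s) - 6*(u-s) ≤ -(0.0143*(d-8)) := by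
      have e2 : (s-u)*(s+u) = 1/72 := by
        have h1 : (s-u)*(s+u) = s^2 - u^2 := by ring
        rw [h1, hs2, hu2]; norm_num
      have step2 : (d-2)*(s-c)*(s+c) = (d-2)*(d-4)/(24*(d+4)) := by
        rw [eq_div_iff (by positivity : (24*(d+4):ℝ) ≠ 0)]
        linear_combination ((d-2)*24*(d+4))*hs2 - 8*(d-2)*hc2'
      have hcs : c ≤ s := by
        have : u ≤ s := by
          rw [hu_def, hs_def]
          exact Real.sqrt_le_sqrt (by norm_num)
        linarith
      have step1 : (d-2)*(s-c)*(s+c) ≤ (d-2)*(s-c)*(s+u) := by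
        apply mul_le_mul_of_nonneg_left (by linarith)
        nlinarith
      have hS : 0.0143*(d-8)*(s+u) + 1/12 ≤ (d-2)*(d-4)/(24*(d+4)) := by
        have h1 : 0.0143*(d-8)*(s+u) ≤ 0.01736*(d-8) := by nlinarith
        have h2 : 0.01736*(d-8) + 1/12 ≤ (d-2)*(d-4)/(24*(d+4)) := by
          rw [le_div_iff₀ (by linarith : (0:ℝ) < 24*(d+4))]
          nlinarith
        linarith
      have hT : (0.0143*(d-8) + 6*(s-u))*(s+u) ≤ ((d-2)*(s-c))*(s+u) := by
        have l1 : (0.0143*(d-8) + 6*(s-u))*(s+u)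
            = 0.0143*(d-8)*(s+u) + 6*((s-u)*(s+u)) := by ring
        have l2 : ((d-2)*(s-c))*(s+u) = (d-2)*(s-c)*(s+u) := by ring
        rw [l1, l2, e2]
        linarith [hS, step1, step2]
      have hfin : 0.0143*(d-8) + 6*(s-u) ≤ (d-2)*(s-c) :=
        le_of_mul_le_mul_right hT hsu_pos
      linarith
    linarith
  · rw [hg8]
    have h1 : Real.sqrt (1/2) ≤ 0.70711 := sqrt_le_of_sq (by norm_num) (by norm_num)
    have h2 : (0.61237:ℝ) ≤ s := le_sqrt_of_sq (by norm_num) (by norm_num)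
    have h3 : r ≤ 0.54007 := sqrt_le_of_sq (by norm_num) (by norm_num)
    have h4 : u ≤ 0.60093 := sqrt_le_of_sq (by norm_num) (by norm_num)
    linarith
end

section
/- For every real d ≥ 4, the derivative-positivity statement holds: the function z ↦ −f(z, 4) + f(z, 2) − f(z, d) + f(z, d + 2) is monotonically increasing on [d, ∞), where f(x,y) = √((x + y − 2)/(x·y)). -/
lemma hasDerivAt_f (y z : ℝ) (hy : 0 < y) (hz : 0 < z) (hne : z + y - 2 ≠ 0) :
    HasDerivAt (fun z => f z y)
      ((2 - y) / (y * z ^ 2) / (2 * Real.sqrt ((z + y - 2) / (z * y)))) z := by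
  have hzy : z * y ≠ 0 := by positivity
  have hq : (z + y - 2) / (z * y) ≠ 0 := div_ne_zero hne hzy
  have ha : HasDerivAt (fun z : ℝ => z + y - 2) 1 z := by
    simpa using ((hasDerivAt_id z).add_const y).sub_const 2
  have hb : HasDerivAt (fun z : ℝ => z * y) y z := by
    simpa using (hasDerivAt_id z).mul_const y
  have h1 : HasDerivAt (fun z : ℝ => (z + y - 2) / (z * y)) ((2 - y) / (y * z ^ 2)) z := by
    have := ha.div hb hzy
    refine this.congr_deriv ?_
    rw [div_eq_div_iff (by positivity) (by positivity)]
    ring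
  have h2 := (Real.hasDerivAt_sqrt hq).comp z h1
  refine h2.congr_deriv ?_
  ring

lemma D_eq (y z : ℝ) (hy : 0 < y) (hz : 0 < z) (hpos : 0 < z + y - 2) :
    (2 - y) / (y * z ^ 2) / (2 * Real.sqrt ((z + y - 2) / (z * y)))
      = (2 - y) * Real.sqrt z / (2 * z ^ 2 * Real.sqrt y * Real.sqrt (z + y - 2)) := by
  rw [Real.sqrt_div hpos.le, Real.sqrt_mul hz.le]
  have hy' := Real.sqrt_pos.mpr hy
  have hz' := Real.sqrt_pos.mpr hz
  have hp' := Real.sqrt_pos.mpr hpos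
  have hyy : Real.sqrt y * Real.sqrt y = y := Real.mul_self_sqrt hy.le
  field_simp
  linear_combination (2 - y) * hyy

lemma core (d z : ℝ) (hd : 4 ≤ d) (hz : d ≤ z) :
    d / (Real.sqrt (d + 2) * Real.sqrt (z + d))
      < 1 / Real.sqrt (z + 2) + (d - 2) / (Real.sqrt d * Real.sqrt (z + d - 2)) := by
  have hdp : (0:ℝ) < d := by linarith
  have hu : 0 < Real.sqrt d := Real.sqrt_pos.mpr hdp
  have hv : 0 < Real.sqrt (d + 2) := Real.sqrt_pos.mpr (by linarith)
  have hA : 0 < Real.sqrt (z + 2) := Real.sqrt_pos.mpr (by linarith)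
  have hB : 0 < Real.sqrt (z + d) := Real.sqrt_pos.mpr (by linarith)
  have hC : 0 < Real.sqrt (z + d - 2) := Real.sqrt_pos.mpr (by linarith)
  have huu : Real.sqrt d * Real.sqrt d = d := Real.mul_self_sqrt hdp.le
  have h2u : 2 ≤ Real.sqrt d := by
    have : Real.sqrt 4 ≤ Real.sqrt d := Real.sqrt_le_sqrt hd
    rwa [show Real.sqrt 4 = 2 by
      rw [show (4:ℝ) = 2 ^ 2 by norm_num, Real.sqrt_sq (by norm_num)]] at this
  -- d / √(d+2) ≤ √d
  have e1 : d / Real.sqrt (d + 2) ≤ Real.sqrt d := by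
    rw [div_le_iff₀ hv]
    have huv : Real.sqrt d ≤ Real.sqrt (d + 2) := Real.sqrt_le_sqrt (by linarith)
    nlinarith [huu]
  -- √d ≤ 1 + (d-2)/√d
  have e2 : Real.sqrt d ≤ 1 + (d - 2) / Real.sqrt d := by
    have h : (d - 2) / Real.sqrt d = Real.sqrt d - 2 / Real.sqrt d := by
      field_simp
      rw [Real.sq_sqrt hdp.le]
    rw [h]
    have : 2 / Real.sqrt d ≤ 1 := by
      rw [div_le_one hu]; exact h2u
    linarith
  have hBC : Real.sqrt (z + d - 2) < Real.sqrt (z + d) :=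
    Real.sqrt_lt_sqrt (by linarith) (by linarith)
  have hAB : Real.sqrt (z + 2) ≤ Real.sqrt (z + d) := Real.sqrt_le_sqrt (by linarith)
  calc d / (Real.sqrt (d + 2) * Real.sqrt (z + d))
      = (d / Real.sqrt (d + 2)) / Real.sqrt (z + d) := by rw [div_div]
    _ ≤ (1 + (d - 2) / Real.sqrt d) / Real.sqrt (z + d) := by
        gcongr
        exact e1.trans e2
    _ = 1 / Real.sqrt (z + d) + (d - 2) / (Real.sqrt d * Real.sqrt (z + d)) := by
        rw [add_div, div_div]
    _ < 1 / Real.sqrt (z + 2) + (d - 2) / (Real.sqrt d * Real.sqrt (z + d - 2)) := by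
        have t1 : 1 / Real.sqrt (z + d) ≤ 1 / Real.sqrt (z + 2) :=
          one_div_le_one_div_of_le hA hAB
        have t2 : (d - 2) / (Real.sqrt d * Real.sqrt (z + d))
            < (d - 2) / (Real.sqrt d * Real.sqrt (z + d - 2)) := by
          apply div_lt_div_of_pos_left (by linarith) (by positivity)
          exact mul_lt_mul_of_pos_left hBC hu
        linarith

theorem stmt18 (d : ℝ) (hd : 4 ≤ d) :
    StrictMonoOn (fun z => -f z 4 + f z 2 - f z d + f z (d + 2)) (Set.Ici d) := by
  have hg : ∀ z ∈ Set.Ici d, HasDerivAt (fun z => -f z 4 + f z 2 - f z d + f z (d + 2))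
      (-((2 - 4) / (4 * z ^ 2) / (2 * Real.sqrt ((z + 4 - 2) / (z * 4))))
        + (2 - 2) / (2 * z ^ 2) / (2 * Real.sqrt ((z + 2 - 2) / (z * 2)))
        - (2 - d) / (d * z ^ 2) / (2 * Real.sqrt ((z + d - 2) / (z * d)))
        + (2 - (d + 2)) / ((d + 2) * z ^ 2) / (2 * Real.sqrt ((z + (d + 2) - 2) / (z * (d + 2))))) z := by
    intro z hz
    simp only [Set.mem_Ici] at hz
    have hz0 : 0 < z := by linarith
    have h4 := hasDerivAt_f 4 z (by norm_num) hz0 (by nlinarith)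
    have h2 := hasDerivAt_f 2 z (by norm_num) hz0 (by nlinarith)
    have hdd := hasDerivAt_f d z (by linarith) hz0 (by nlinarith)
    have hdp2 := hasDerivAt_f (d + 2) z (by linarith) hz0 (by nlinarith)
    exact ((h4.neg.add h2).sub hdd).add hdp2
  apply strictMonoOn_of_deriv_pos (convex_Ici d)
  · intro z hz
    exact (hg z hz).continuousAt.continuousWithinAt
  · intro z hz
    rw [interior_Ici] at hz
    have hzd : d < z := hz
    have hz0 : 0 < z := by linarith
    rw [(hg z hzd.le).deriv]
    rw [D_eq 4 z (by norm_num) hz0 (by nlinarith),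
        D_eq 2 z (by norm_num) hz0 (by nlinarith),
        D_eq d z (by linarith) hz0 (by nlinarith),
        D_eq (d + 2) z (by linarith) hz0 (by nlinarith)]
    have hE : -((2 - 4) * Real.sqrt z / (2 * z ^ 2 * Real.sqrt 4 * Real.sqrt (z + 4 - 2)))
        + (2 - 2) * Real.sqrt z / (2 * z ^ 2 * Real.sqrt 2 * Real.sqrt (z + 2 - 2))
        - (2 - d) * Real.sqrt z / (2 * z ^ 2 * Real.sqrt d * Real.sqrt (z + d - 2))
        + (2 - (d + 2)) * Real.sqrt z / (2 * z ^ 2 * Real.sqrt (d + 2) * Real.sqrt (z + (d + 2) - 2))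
        = Real.sqrt z / (2 * z ^ 2) *
          (2 / (Real.sqrt 4 * Real.sqrt (z + 4 - 2)) + (d - 2) / (Real.sqrt d * Real.sqrt (z + d - 2))
            - d / (Real.sqrt (d + 2) * Real.sqrt (z + (d + 2) - 2))) := by
      ring
    rw [hE]
    apply mul_pos (by positivity)
    rw [show z + 4 - 2 = z + 2 by ring, show z + (d + 2) - 2 = z + d by ring,
        show Real.sqrt 4 = 2 by
          rw [show (4:ℝ) = 2 ^ 2 by norm_num, Real.sqrt_sq (by norm_num)],
        show (2:ℝ) / (2 * Real.sqrt (z + 2)) = 1 / Real.sqrt (z + 2) by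
          rw [div_eq_div_iff (by positivity : (0:ℝ) < 2 * Real.sqrt (z + 2)).ne' (by positivity : (0:ℝ) < Real.sqrt (z + 2)).ne']
          ring]
    have := core d z hd hzd.le
    linarith
end

section
/- For all real z ≥ w ≥ 9, the function z ↦ −f(z, w) + f(2, 1) + (z − 2)·(−f(4, w) + f(4, z + w − 4)) is monotonically decreasing in z, where f(x,y) = √((x + y − 2)/(x·y)). -/
set_option maxHeartbeats 1000000

noncomputable def Dv (w z : ℝ) : ℝ :=
  (w - 2) / (2 * z ^ 2 * w * Real.sqrt ((z + w - 2) / (z * w)))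
  + (-f 4 w + Real.sqrt ((z + w - 2) / (4 * (z + w - 4))))
  - (z - 2) / (4 * (z + w - 4) ^ 2 * Real.sqrt ((z + w - 2) / (4 * (z + w - 4))))

lemma hasDeriv_aux (w z : ℝ) (hw : 9 ≤ w) (hz : w ≤ z) :
    HasDerivAt (fun z => -f z w + f 2 1 + (z - 2) * (-f 4 w + f 4 (z + w - 4)))
      (Dv w z) z := by
  have hz0 : 0 < z := by linarith
  have hw0 : 0 < w := by linarith
  have hs0 : 0 < z + w - 4 := by linarith
  have ha0 : 0 < z + w - 2 := by linarith
  have hzw : z * w ≠ 0 := by positivity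
  have hp0 : (z + w - 2) / (z * w) ≠ 0 := ne_of_gt (div_pos ha0 (by positivity))
  have hden : (4:ℝ) * (z + w - 4) ≠ 0 := by positivity
  have hq0 : (4 + (z + w - 4) - 2) / (4 * (z + w - 4)) ≠ 0 :=
    ne_of_gt (div_pos (by linarith) (by positivity))
  have H1 := ((((hasDerivAt_id z).add_const w).sub_const 2).div
      ((hasDerivAt_id z).mul_const w) hzw).sqrt hp0
  have H2 := (((((((hasDerivAt_id z).add_const w).sub_const 4).const_add 4).sub_const 2)).div
      ((((hasDerivAt_id z).add_const w).sub_const 4).const_mul 4) hden).sqrt hq0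
  have Hg := (H1.neg.add_const (f 2 1)).add
      (((hasDerivAt_id z).sub_const 2).mul (H2.const_add (-f 4 w)))
  have hfun : (fun z => -f z w + f 2 1 + (z - 2) * (-f 4 w + f 4 (z + w - 4)))
      = (fun x : ℝ => -Real.sqrt ((x + w - 2) / (x * w)) + f 2 1
        + (x - 2) * (-f 4 w + Real.sqrt ((4 + (x + w - 4) - 2) / (4 * (x + w - 4))))) := by
    funext x; rfl
  rw [hfun]
  convert Hg using 1
  · rfl
  · rfl
  · rfl
  simp only [id_eq, Pi.div_apply]
  have e1 : (4 + (z + w - 4) - 2 : ℝ) = z + w - 2 := by ring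
  rw [e1]
  set sp := Real.sqrt ((z + w - 2) / (z * w)) with hspdef
  set sq := Real.sqrt ((z + w - 2) / (4 * (z + w - 4))) with hsqdef
  have hsp : 0 < sp := Real.sqrt_pos.mpr (div_pos ha0 (by positivity))
  have hsq : 0 < sq := Real.sqrt_pos.mpr (div_pos ha0 (by positivity))
  unfold Dv
  rw [← hspdef, ← hsqdef]
  field_simp
  ring

lemma neg_aux (w z : ℝ) (hw : 9 ≤ w) (hz : w ≤ z) : Dv w z < 0 := by
  have hz0 : 0 < z := by linarith
  have hw0 : 0 < w := by linarith
  have hs0 : 0 < z + w - 4 := by linarith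
  have ha0 : 0 < z + w - 2 := by linarith
  unfold Dv
  set sp := Real.sqrt ((z + w - 2) / (z * w)) with hspdef
  set sq := Real.sqrt ((z + w - 2) / (4 * (z + w - 4))) with hsqdef
  have hsp : 0 < sp := Real.sqrt_pos.mpr (div_pos ha0 (by positivity))
  have hsq : 0 < sq := Real.sqrt_pos.mpr (div_pos ha0 (by positivity))
  have hsp2 : sp ^ 2 = (z + w - 2) / (z * w) :=
    Real.sq_sqrt (le_of_lt (div_pos ha0 (by positivity)))
  have hsq2 : sq ^ 2 = (z + w - 2) / (4 * (z + w - 4)) :=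
    Real.sq_sqrt (le_of_lt (div_pos ha0 (by positivity)))
  have hk : sq ≤ f 4 w := by
    rw [hsqdef]
    unfold f
    apply Real.sqrt_le_sqrt
    rw [div_le_div_iff₀ (by positivity) (by positivity)]
    nlinarith
  have hmain : (w - 2) / (2 * z ^ 2 * w * sp) < (z - 2) / (4 * (z + w - 4) ^ 2 * sq) := by
    rw [div_lt_div_iff₀ (by positivity) (by positivity)]
    apply lt_of_pow_lt_pow_left₀ 2 (mul_nonneg (by linarith) (by positivity))
    have eL : ((w - 2) * (4 * (z + w - 4) ^ 2 * sq)) ^ 2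
        = 4 * (w - 2) ^ 2 * (z + w - 4) ^ 3 * (z + w - 2) := by
      have h : ((w - 2) * (4 * (z + w - 4) ^ 2 * sq)) ^ 2
          = (w - 2) ^ 2 * 16 * (z + w - 4) ^ 4 * sq ^ 2 := by ring
      rw [h, hsq2]; field_simp; ring
    have eR : ((z - 2) * (2 * z ^ 2 * w * sp)) ^ 2
        = 4 * (z - 2) ^ 2 * z ^ 3 * w * (z + w - 2) := by
      have h : ((z - 2) * (2 * z ^ 2 * w * sp)) ^ 2
          = (z - 2) ^ 2 * 4 * z ^ 4 * w ^ 2 * sp ^ 2 := by ring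
      rw [h, hsp2]; field_simp
    rw [eL, eR]
    have h1 : z + w - 4 < 2 * z := by linarith
    have h2 : (z + w - 4) ^ 3 < (2 * z) ^ 3 := pow_lt_pow_left₀ h1 (by linarith) (by norm_num)
    have hcube : (z + w - 4) ^ 3 < w * z ^ 3 := by
      nlinarith [pow_pos hz0 3]
    have hsqle : (w - 2) ^ 2 ≤ (z - 2) ^ 2 := by nlinarith
    have hC : (w - 2) ^ 2 * (z + w - 4) ^ 3 < (z - 2) ^ 2 * (w * z ^ 3) := by
      calc (w - 2) ^ 2 * (z + w - 4) ^ 3 < (w - 2) ^ 2 * (w * z ^ 3) := by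
            exact mul_lt_mul_of_pos_left hcube (pow_pos (by linarith : (0:ℝ) < w - 2) 2)
        _ ≤ (z - 2) ^ 2 * (w * z ^ 3) := by
            apply mul_le_mul_of_nonneg_right hsqle (by positivity)
    nlinarith [mul_lt_mul_of_pos_right hC (show (0:ℝ) < 4 * (z + w - 2) by linarith)]
  linarith

theorem stmt19 (w : ℝ) (hw : 9 ≤ w) :
    StrictAntiOn (fun z => -f z w + f 2 1 + (z - 2) * (-f 4 w + f 4 (z + w - 4)))
      (Set.Ici w) := by
  apply strictAntiOn_of_deriv_neg (convex_Ici w)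
  · intro z hz
    exact (hasDeriv_aux w z hw hz).continuousAt.continuousWithinAt
  · intro z hz
    rw [interior_Ici] at hz
    rw [(hasDeriv_aux w z hw hz.le).deriv]
    exact neg_aux w z hw hz.le
end
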